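/- Let B be an ordered category with finitely many objects and finite hom-sets whose additive cover ac(B) has finite products. Then ac(B) admits pull-backs. Moreover, for two morphisms α : Q → T and β : R → T in B, the pull-back of α and β in ac(B) is the direct sum ⊕_{i ∈ I_{α,β}} S_i, where Q × R = ⊕_{i∈I} S_i with structural morphisms χ_i : S_i → Q and ρ_i : S_i → R, and I_{α,β} ⊆ I is the subset of indices i with α ∘ χ_i = β ∘ ρ_i. -/

import Mathlib

open CategoryTheory Limits

universe v u

/-- Objects of the additive cover `ac(B)`: finite families of `B`-objects. -/
structure ACObj (B : Type u) : Type (u + 1) where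
  I : Type
  [fin : Finite I]
  obj : I → B

attribute [instance] ACObj.fin

/-- Morphisms of the additive cover. -/
structure ACHom {B : Type u} [Category.{v} B] (X Y : ACObj B) where
  f : X.I → Y.I
  φ : ∀ j : X.I, X.obj j ⟶ Y.obj (f j)

/-- The additive cover `ac(B)` of a category `B`. -/
instance ACCategory (B : Type u) [Category.{v} B] : Category (ACObj B) where
  Hom := ACHom
  id X := ⟨fun j => j, fun j => 𝟙 _⟩
  comp {X Y Z} g h := ⟨fun j => h.f (g.f j), fun j => g.φ j ≫ h.φ (g.f j)⟩
  id_comp f := by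
    cases f with
    | mk ff φ => simp only [Category.id_comp]
  comp_id f := by
    cases f with
    | mk ff φ => simp only [Category.comp_id]
  assoc f g h := by
    cases f; cases g; cases h; simp only [Category.assoc]

variable {B : Type u} [Category.{v} B]

/-- The canonical embedding `B → ac(B)` on objects. -/
abbrev single (Q : B) : ACObj B := ⟨PUnit, fun _ => Q⟩

/-- The canonical embedding on morphisms. -/
abbrev singleHom {Q T : B} (α : Q ⟶ T) : single Q ⟶ single T :=
  ⟨fun _ => PUnit.unit, fun _ => α⟩

lemma hom_ext_single {X : ACObj B} {Q : B} {g h : X ⟶ single Q}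
    (w : ∀ i : X.I, g.φ i = h.φ i) : g = h := by
  revert g h
  change ∀ {g h : ACHom X (single Q)}, _
  intro g h w
  cases g with
  | mk gf gφ =>
    cases h with
    | mk hf hφ =>
      obtain rfl : gf = hf := funext fun i => Subsingleton.elim _ _
      congr 1
      funext i
      exact w i

/-- Restriction of an additive-cover object to a subset of indices. -/
abbrev ACObj.restrict (X : ACObj B) (p : X.I → Prop) : ACObj B :=
  ⟨{i : X.I // p i}, fun i => X.obj i.1⟩

/-- The first structural morphism of the restricted object. -/
abbrev restrictFst {X : ACObj B} {Q R T : B} (α : Q ⟶ T) (β : R ⟶ T)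
    (χ : X ⟶ single Q) (ρ : X ⟶ single R) :
    (X.restrict (fun i => χ.φ i ≫ α = ρ.φ i ≫ β)) ⟶ single Q :=
  ⟨fun _ => PUnit.unit, fun i => χ.φ i.1⟩

/-- The second structural morphism of the restricted object. -/
abbrev restrictSnd {X : ACObj B} {Q R T : B} (α : Q ⟶ T) (β : R ⟶ T)
    (χ : X ⟶ single Q) (ρ : X ⟶ single R) :
    (X.restrict (fun i => χ.φ i ≫ α = ρ.φ i ≫ β)) ⟶ single R :=
  ⟨fun _ => PUnit.unit, fun i => ρ.φ i.1⟩

lemma restrict_comm {X : ACObj B} {Q R T : B} (α : Q ⟶ T) (β : R ⟶ T)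
    (χ : X ⟶ single Q) (ρ : X ⟶ single R) :
    restrictFst α β χ ρ ≫ singleHom α = restrictSnd α β χ ρ ≫ singleHom β :=
  hom_ext_single fun i => i.2

/-!
In an ordered `B` whose additive cover has binary products, `singleHom m ≫ -` is injective on
morphisms out of `single S`. Indeed, the graph `⟨𝟙, h⟩ : single S ⟶ single S ⨯ C` of `h` lands in
one summand `P` of the product and splits the projection `P ⟶ S`, which is therefore an
isomorphism; so two graphs landing in the same summand coincide, and precomposing with `m` does not
move the summand. Hence if `u` equalizes two maps, so does every summand that `u` hits. The lift of
a cone over `f, g` to the product of the sources therefore lands in the summands on which `f` and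
`g` agree, and restricting the product to those summands gives the pull-back.
-/

def IsOrdered (B : Type u) [Category.{v} B] : Prop :=
  ∀ Q R : B, Nonempty (R ⟶ Q) → Nonempty (Q ⟶ R) → ∀ f : R ⟶ Q, IsIso f

lemma IsOrdered.eq_of_comp_eq_id (hB : IsOrdered B) {S P : B} {a b : S ⟶ P} (p : P ⟶ S)
    (ha : a ≫ p = 𝟙 S) (hb : b ≫ p = 𝟙 S) : a = b := by
  have : IsIso p := hB S P ⟨p⟩ ⟨a⟩ p
  rw [← cancel_mono p, ha, hb]

namespace ACHom

variable {X Y Z : ACObj B}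

@[simp] lemma id_φ (j : X.I) : (𝟙 X : X ⟶ X).φ j = 𝟙 (X.obj j) := rfl

@[simp] lemma comp_f (g : X ⟶ Y) (h : Y ⟶ Z) (j : X.I) : (g ≫ h).f j = h.f (g.f j) := rfl

@[simp] lemma comp_φ (g : X ⟶ Y) (h : Y ⟶ Z) (j : X.I) :
    (g ≫ h).φ j = g.φ j ≫ h.φ (g.f j) := rfl

lemma congr_f {g h : X ⟶ Y} (e : g = h) (j : X.I) : g.f j = h.f j := by
  subst e; rfl

lemma congr_φ {g h : X ⟶ Y} (e : g = h) (j : X.I) :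
    g.φ j ≫ eqToHom (congrArg Y.obj (congr_f e j)) = h.φ j := by
  subst e; simp

lemma ext {g h : X ⟶ Y} (hf : ∀ j, g.f j = h.f j)
    (hφ : ∀ j, g.φ j ≫ eqToHom (congrArg Y.obj (hf j)) = h.φ j) : g = h := by
  obtain ⟨gf, gφ⟩ := g
  obtain ⟨hf', hφ'⟩ := h
  obtain rfl : gf = hf' := funext hf
  congr 1
  funext j
  simpa using hφ j

lemma congr_φ_single {Q : B} {g h : X ⟶ single Q} (e : g = h) (j : X.I) : g.φ j = h.φ j := by
  simpa using congr_φ e j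

end ACHom

def ACObj.incl (X : ACObj B) (j : X.I) : single (X.obj j) ⟶ X :=
  ⟨fun _ => j, fun _ => 𝟙 _⟩

lemma ACObj.hom_ext_incl {X Y : ACObj B} {g h : X ⟶ Y}
    (w : ∀ j : X.I, X.incl j ≫ g = X.incl j ≫ h) : g = h :=
  ACHom.ext (fun j => ACHom.congr_f (w j) ⟨⟩) fun j => by
    simpa [ACObj.incl] using ACHom.congr_φ (w j) ⟨⟩

lemma singleHom_comp_incl {X Y : ACObj B} (u : X ⟶ Y) (j : X.I) :
    singleHom (u.φ j) ≫ Y.incl (u.f j) = X.incl j ≫ u :=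
  ACHom.ext (fun _ => rfl) fun _ => by simp [ACObj.incl]

lemma eq_singleHom_comp_incl {S : B} {Y : ACObj B} (u : single S ⟶ Y) :
    u = singleHom (u.φ ⟨⟩) ≫ Y.incl (u.f ⟨⟩) := by
  rw [singleHom_comp_incl]
  exact (Category.id_comp u).symm

def ACObj.restrictι (X : ACObj B) (p : X.I → Prop) : X.restrict p ⟶ X :=
  ⟨Subtype.val, fun _ => 𝟙 _⟩

def ACObj.restrictLift {D X : ACObj B} {p : X.I → Prop} (u : D ⟶ X) (hu : ∀ k, p (u.f k)) :
    D ⟶ X.restrict p :=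
  ⟨fun k => ⟨u.f k, hu k⟩, u.φ⟩

@[simp] lemma ACObj.restrictLift_restrictι {D X : ACObj B} {p : X.I → Prop} (u : D ⟶ X)
    (hu : ∀ k, p (u.f k)) : ACObj.restrictLift u hu ≫ X.restrictι p = u :=
  ACHom.ext (fun _ => rfl) fun _ => by simp [ACObj.restrictLift, ACObj.restrictι]

@[simp] lemma ACObj.incl_restrictι {X : ACObj B} {p : X.I → Prop} (k : {j // p j}) :
    (X.restrict p).incl k ≫ X.restrictι p = X.incl k.1 :=
  ACHom.ext (fun _ => rfl) fun _ => by simp [ACObj.incl, ACObj.restrictι]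

instance ACObj.mono_restrictι (X : ACObj B) (p : X.I → Prop) : Mono (X.restrictι p) where
  right_cancellation g h e :=
    ACHom.ext (fun k => Subtype.ext (ACHom.congr_f e k)) fun k => by
      simpa [ACObj.restrictι] using ACHom.congr_φ e k

lemma ACHom.eq_of_comp_eq_id (hB : IsOrdered B) {S : B} {Y : ACObj B} {u v : single S ⟶ Y}
    (π : Y ⟶ single S) (hu : u ≫ π = 𝟙 _) (hv : v ≫ π = 𝟙 _) (huv : u.f ⟨⟩ = v.f ⟨⟩) : u = v := by
  obtain ⟨j, a, rfl⟩ : ∃ j a, u = singleHom a ≫ Y.incl j := ⟨_, _, eq_singleHom_comp_incl u⟩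
  obtain ⟨j', b, rfl⟩ : ∃ j b, v = singleHom b ≫ Y.incl j := ⟨_, _, eq_singleHom_comp_incl v⟩
  obtain rfl : j = j' := huv
  have ha : a ≫ π.φ j = 𝟙 S := by simpa [ACObj.incl] using ACHom.congr_φ_single hu ⟨⟩
  have hb : b ≫ π.φ j = 𝟙 S := by simpa [ACObj.incl] using ACHom.congr_φ_single hv ⟨⟩
  rw [hB.eq_of_comp_eq_id _ ha hb]

section BinaryProducts

variable [HasBinaryProducts (ACObj B)]

lemma singleHom_cancel_left (hB : IsOrdered B) {P S : B} (m : P ⟶ S) {C : ACObj B}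
    {h₁ h₂ : single S ⟶ C} (w : singleHom m ≫ h₁ = singleHom m ≫ h₂) : h₁ = h₂ := by
  let u : single S ⟶ single S ⨯ C := prod.lift (𝟙 _) h₁
  let v : single S ⟶ single S ⨯ C := prod.lift (𝟙 _) h₂
  have hmuv : singleHom m ≫ u = singleHom m ≫ v := by
    ext <;> simp [u, v, w]
  have huv : u = v :=
    ACHom.eq_of_comp_eq_id hB prod.fst (prod.lift_fst _ _) (prod.lift_fst _ _)
      (ACHom.congr_f hmuv ⟨⟩)
  calc h₁ = u ≫ prod.snd := (prod.lift_snd _ _).symm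
    _ = v ≫ prod.snd := by rw [huv]
    _ = h₂ := prod.lift_snd _ _

lemma incl_comp_eq_of_comp_eq (hB : IsOrdered B) {D X C : ACObj B} {u : D ⟶ X} {a b : X ⟶ C}
    (w : u ≫ a = u ≫ b) (k : D.I) : X.incl (u.f k) ≫ a = X.incl (u.f k) ≫ b := by
  apply singleHom_cancel_left hB (u.φ k)
  simp only [← Category.assoc, singleHom_comp_incl]
  simp only [Category.assoc, w]

end BinaryProducts

section Pullback

variable {X A A' C : ACObj B} {χ : X ⟶ A} {ρ : X ⟶ A'} {f : A ⟶ C} {g : A' ⟶ C} {p : X.I → Prop}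

lemma restrictι_comp_comm (hp : ∀ j, p j ↔ X.incl j ≫ χ ≫ f = X.incl j ≫ ρ ≫ g) :
    (X.restrictι p ≫ χ) ≫ f = (X.restrictι p ≫ ρ) ≫ g :=
  ACObj.hom_ext_incl fun k => by
    simpa only [← Category.assoc, ACObj.incl_restrictι] using (hp k.1).1 k.2

noncomputable def isLimitRestrictPullbackCone [HasBinaryProducts (ACObj B)] (hB : IsOrdered B)
    (hX : IsLimit (BinaryFan.mk χ ρ))
    (hp : ∀ j, p j ↔ X.incl j ≫ χ ≫ f = X.incl j ≫ ρ ≫ g) :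
    IsLimit (PullbackCone.mk _ _ (restrictι_comp_comm hp)) := by
  let l (s : PullbackCone f g) : s.pt ⟶ X := (BinaryFan.IsLimit.lift' hX s.fst s.snd).1
  have hl₁ (s : PullbackCone f g) : l s ≫ χ = s.fst := (BinaryFan.IsLimit.lift' hX _ _).2.1
  have hl₂ (s : PullbackCone f g) : l s ≫ ρ = s.snd := (BinaryFan.IsLimit.lift' hX _ _).2.2
  have mem (s : PullbackCone f g) (k : s.pt.I) : p ((l s).f k) := by
    refine (hp _).2 (incl_comp_eq_of_comp_eq hB ?_ k)
    rw [← Category.assoc, ← Category.assoc, hl₁, hl₂, s.condition]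
  refine PullbackCone.IsLimit.mk _ (fun s => ACObj.restrictLift (l s) (mem s)) ?_ ?_ ?_
  · intro s
    rw [← Category.assoc, ACObj.restrictLift_restrictι, hl₁]
  · intro s
    rw [← Category.assoc, ACObj.restrictLift_restrictι, hl₂]
  · intro s m hm₁ hm₂
    rw [← cancel_mono (X.restrictι p), ACObj.restrictLift_restrictι]
    refine BinaryFan.IsLimit.hom_ext hX ?_ ?_
    · exact (Category.assoc _ _ _).trans (hm₁.trans (hl₁ s).symm)
    · exact (Category.assoc _ _ _).trans (hm₂.trans (hl₂ s).symm)

end Pullback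

lemma incl_comp_singleHom_eq_iff {X : ACObj B} {Q R T : B} (α : Q ⟶ T) (β : R ⟶ T)
    (χ : X ⟶ single Q) (ρ : X ⟶ single R) (j : X.I) :
    X.incl j ≫ χ ≫ singleHom α = X.incl j ≫ ρ ≫ singleHom β ↔ χ.φ j ≫ α = ρ.φ j ≫ β := by
  refine ⟨fun h => ?_, fun h => hom_ext_single fun _ => ?_⟩
  · simpa [ACObj.incl] using ACHom.congr_φ_single h ⟨⟩
  · simpa [ACObj.incl] using h

theorem additive_cover_has_pullbacks_general
    (hord : ∀ Q R : B, Nonempty (R ⟶ Q) → Nonempty (Q ⟶ R) →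
      ∀ f : R ⟶ Q, IsIso f)
    [HasBinaryProducts (ACObj B)] :
    HasPullbacks (ACObj B) ∧
    ∀ (Q R T : B) (α : Q ⟶ T) (β : R ⟶ T)
      (X : ACObj B) (χ : X ⟶ single Q) (ρ : X ⟶ single R)
      (_ : IsLimit (BinaryFan.mk χ ρ)),
      Nonempty (IsLimit (PullbackCone.mk _ _ (restrict_comm α β χ ρ))) := by
  refine ⟨@hasPullbacks_of_hasLimit_cospan _ _ fun {A A' _ _ _} =>
    HasLimit.mk ⟨_, isLimitRestrictPullbackCone hord (prodIsProd A A') fun _ => Iff.rfl⟩, ?_⟩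
  intro Q R T α β X χ ρ hX
  have hp j := (incl_comp_singleHom_eq_iff α β χ ρ j).symm
  refine ⟨?_⟩
  convert isLimitRestrictPullbackCone hord hX hp using 2 <;>
    exact hom_ext_single fun _ => (Category.id_comp _).symm

/-- If the additive cover `ac(B)` of an ordered category `B` (with finitely many
objects and finite hom-sets) has binary products, then `ac(B)` admits
pull-backs; moreover, given `α : Q ⟶ T`, `β : R ⟶ T` in `B` and a binary product
`X = Q × R` with structural morphisms `χ`, `ρ`, the restriction of `X` to the
indices `i` with `χ_i ≫ α = ρ_i ≫ β` is a pull-back of `α` and `β`. -/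
theorem additive_cover_has_pullbacks
    [Finite B] (hfin : ∀ Q R : B, Finite (Q ⟶ R))
    (hord : ∀ Q R : B, Nonempty (R ⟶ Q) → Nonempty (Q ⟶ R) →
      ∀ f : R ⟶ Q, IsIso f)
    [HasBinaryProducts (ACObj B)] :
    HasPullbacks (ACObj B) ∧
    ∀ (Q R T : B) (α : Q ⟶ T) (β : R ⟶ T)
      (X : ACObj B) (χ : X ⟶ single Q) (ρ : X ⟶ single R)
      (_ : IsLimit (BinaryFan.mk χ ρ)),
      Nonempty (IsLimit (PullbackCone.mk _ _ (restrict_comm α β χ ρ))) :=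
  additive_cover_has_pullbacks_general hord
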